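/- arXiv:0804.4235 — 2 statements merged into one kernel-verified Lean document; each statement's English description precedes it below -/
import Mathlib

section
/- If φ is a Lie algebra automorphism of 𝔤 that commutes with τ² (so φ preserves 𝔨 and 𝔭) and whose restriction to 𝔭 commutes with the restriction of τ to 𝔭 (that is, φ(τ(p)) = τ(φ(p)) for all p ∈ 𝔭), then φ commutes with τ on all of 𝔤: φ(τ(x)) = τ(φ(x)) for every x ∈ 𝔤. -/
/-!
On `𝔨` the defect `d = φ τ k - τ φ k` again lies in `𝔨`, and applying the hypothesis on `𝔭` to
`⁅k, q⁆ ∈ 𝔭` shows that `d` brackets every `τ φ q` (`q ∈ 𝔭`) to zero; these exhaust `𝔭`, so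
`d = 0` by injectivity of `ad` on `𝔨`. Since `τ²` is an involution and `2` is invertible,
`𝔤 = 𝔨 ⊕ 𝔭`, so the two linear maps `φ ∘ τ` and `τ ∘ φ` agree everywhere.
-/

theorem LinearMap.ext_of_eq_on_fixed_of_eq_on_antifixed {R M N : Type*} [Ring R]
    [Invertible (2 : R)] [AddCommGroup M] [Module R M] [AddCommGroup N] [Module R N]
    (σ : M →ₗ[R] M) (hσ : ∀ x, σ (σ x) = x) (A B : M →ₗ[R] N)
    (h_fixed : ∀ k, σ k = k → A k = B k) (h_antifixed : ∀ p, σ p = -p → A p = B p) :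
    A = B := by
  ext x
  have hx : x = (⅟2 : R) • (x + σ x) + (⅟2 : R) • (x - σ x) := by
    rw [← smul_add, add_add_sub_cancel, ← two_smul R x, smul_smul, invOf_mul_self, one_smul]
  have hk : σ ((⅟2 : R) • (x + σ x)) = (⅟2 : R) • (x + σ x) := by
    rw [map_smul, map_add, hσ, add_comm]
  have hp : σ ((⅟2 : R) • (x - σ x)) = -((⅟2 : R) • (x - σ x)) := by
    rw [map_smul, map_sub, hσ, ← smul_neg, neg_sub]
  rw [hx, map_add, map_add, h_fixed _ hk, h_antifixed _ hp]

namespace LieHom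

variable {R L : Type*} [CommRing R] [LieRing L] [LieAlgebra R L]
  (τ : L →ₗ⁅R⁆ L) (φ : L ≃ₗ⁅R⁆ L)

theorem exists_antifixed_apply_eq_of_antifixed
    (hφτ2 : ∀ x, φ (τ (τ x)) = τ (τ (φ x))) {p : L} (hp : τ (τ p) = -p) :
    ∃ q, τ (τ q) = -q ∧ τ (φ q) = p := by
  have hτ4 : τ (τ (τ (τ p))) = p := by rw [hp, map_neg, map_neg, hp, neg_neg]
  set q := φ.symm (τ (τ (τ p)))
  have hφq : φ q = τ (τ (τ p)) := φ.apply_symm_apply _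
  have hq : φ (τ (τ q)) = φ (-q) := by
    rw [hφτ2, map_neg, hφq, hτ4, hp, map_neg, neg_neg]
  exact ⟨q, φ.injective hq, by rw [hφq, hτ4]⟩

theorem lie_sub_apply_eq_zero_of_commute_on_antifixed
    (hφ𝔭 : ∀ p, τ (τ p) = -p → φ (τ p) = τ (φ p))
    {k : L} (hk : τ (τ k) = k) {q : L} (hq : τ (τ q) = -q) :
    ⁅φ (τ k) - τ (φ k), τ (φ q)⁆ = 0 := by
  have hkq : τ (τ ⁅k, q⁆) = -⁅k, q⁆ := by rw [τ.map_lie, τ.map_lie, hk, hq, lie_neg]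
  have h := hφ𝔭 _ hkq
  rw [τ.map_lie, φ.map_lie, φ.map_lie, τ.map_lie, hφ𝔭 q hq] at h
  rw [sub_lie, h, sub_self]

theorem commute_on_fixed_of_commute_on_antifixed
    (hinj : ∀ ξ, τ (τ ξ) = ξ → (∀ p, τ (τ p) = -p → ⁅ξ, p⁆ = 0) → ξ = 0)
    (hφτ2 : ∀ x, φ (τ (τ x)) = τ (τ (φ x)))
    (hφ𝔭 : ∀ p, τ (τ p) = -p → φ (τ p) = τ (φ p)) {k : L} (hk : τ (τ k) = k) :
    φ (τ k) = τ (φ k) := by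
  have hfixed : τ (τ (φ (τ k) - τ (φ k))) = φ (τ k) - τ (φ k) := by
    rw [map_sub, map_sub, ← hφτ2, ← hφτ2, hk]
  refine sub_eq_zero.mp (hinj _ hfixed fun p hp => ?_)
  obtain ⟨q, hq, rfl⟩ := exists_antifixed_apply_eq_of_antifixed τ φ hφτ2 hp
  exact lie_sub_apply_eq_zero_of_commute_on_antifixed τ φ hφ𝔭 hk hq

end LieHom

theorem stmt4_general {𝔤 : Type*} [LieRing 𝔤] [LieAlgebra ℝ 𝔤]
    (τ : 𝔤 →ₗ⁅ℝ⁆ 𝔤) (hτ : ∀ x, τ (τ (τ (τ x))) = x)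
    (hinj : ∀ ξ : 𝔤, τ (τ ξ) = ξ → (∀ p : 𝔤, τ (τ p) = -p → ⁅ξ, p⁆ = 0) → ξ = 0)
    (φ : 𝔤 ≃ₗ⁅ℝ⁆ 𝔤)
    (hφτ2 : ∀ x : 𝔤, φ (τ (τ x)) = τ (τ (φ x)))
    (hφ𝔭 : ∀ p : 𝔤, τ (τ p) = -p → φ (τ p) = τ (φ p)) :
    ∀ x : 𝔤, φ (τ x) = τ (φ x) := by
  have h := LinearMap.ext_of_eq_on_fixed_of_eq_on_antifixed
    ((τ : 𝔤 →ₗ[ℝ] 𝔤) ∘ₗ τ) hτ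
    ((φ : 𝔤 →ₗ[ℝ] 𝔤) ∘ₗ τ) ((τ : 𝔤 →ₗ[ℝ] 𝔤) ∘ₗ φ)
    (fun _ hk => LieHom.commute_on_fixed_of_commute_on_antifixed τ φ hinj hφτ2 hφ𝔭 hk) hφ𝔭
  exact fun x => LinearMap.congr_fun h x

/-- Let `𝔤` be a finite-dimensional real Lie algebra and `τ`
an automorphism with `τ⁴ = id`; set `𝔨 = ker (τ² - id)` and `𝔭 = ker (τ² + id)`
(membership expressed by `τ (τ ξ) = ξ` resp. `τ (τ p) = -p`), and assume `ad`
restricted to `𝔭` is injective on `𝔨`.  If `φ` is a Lie algebra automorphism of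
`𝔤` commuting with `τ²` and whose restriction to `𝔭` commutes with `τ|𝔭`, then
`φ` commutes with `τ` on all of `𝔤`. -/
theorem stmt4 {𝔤 : Type*} [LieRing 𝔤] [LieAlgebra ℝ 𝔤] [FiniteDimensional ℝ 𝔤]
    (τ : 𝔤 →ₗ⁅ℝ⁆ 𝔤) (hτ : ∀ x, τ (τ (τ (τ x))) = x)
    (hinj : ∀ ξ : 𝔤, τ (τ ξ) = ξ → (∀ p : 𝔤, τ (τ p) = -p → ⁅ξ, p⁆ = 0) → ξ = 0)
    (φ : 𝔤 ≃ₗ⁅ℝ⁆ 𝔤)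
    (hφτ2 : ∀ x : 𝔤, φ (τ (τ x)) = τ (τ (φ x)))
    (hφ𝔭 : ∀ p : 𝔤, τ (τ p) = -p → φ (τ p) = τ (φ p)) :
    ∀ x : 𝔤, φ (τ x) = τ (φ x) :=
  stmt4_general τ hτ hinj φ hφτ2 hφ𝔭
end

section
/- If A is a skew-adjoint linear endomorphism of V which anti-commutes with j, i.e. A∘j = −j∘A, then A = 0. (Equivalently: every skew-adjoint endomorphism of a 2-dimensional inner product space commutes with j, so the j-anti-commuting part of any skew-adjoint endomorphism vanishes.) -/
open scoped RealInnerProductSpace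

/-- Let `V` be a 2-dimensional real inner product space and
`j` a skew-adjoint endomorphism with `j² = -id`.  If `A` is a skew-adjoint
endomorphism of `V` that anti-commutes with `j`, then `A = 0`. -/
theorem stmt10 {V : Type*} [NormedAddCommGroup V] [InnerProductSpace ℝ V]
    [FiniteDimensional ℝ V] (hV : Module.finrank ℝ V = 2)
    (j : V →ₗ[ℝ] V) (hjskew : ∀ x y : V, ⟪j x, y⟫ = -⟪x, j y⟫)
    (hj2 : j ∘ₗ j = -(LinearMap.id : V →ₗ[ℝ] V))
    (A : V →ₗ[ℝ] V) (hAskew : ∀ x y : V, ⟪A x, y⟫ = -⟪x, A y⟫)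
    (hanti : A ∘ₗ j = -(j ∘ₗ A)) :
    A = 0 := by
  ext x
  simp only [LinearMap.zero_apply]
  by_cases hx : x = 0
  · simp [hx]
  -- basic facts
  have hjj : ∀ y : V, j (j y) = -y := by
    intro y
    have := congrArg (fun f => f y) hj2
    simpa using this
  have hAj : ∀ y : V, A (j y) = -(j (A y)) := by
    intro y
    have := congrArg (fun f => f y) hanti
    simpa using this
  have hjx : j x ≠ 0 := by
    intro h
    apply hx
    have hj := hjj x
    rw [h, map_zero] at hj
    simpa using hj.symm
  -- ⟪A x, x⟫ = 0
  have h1 : ⟪A x, x⟫ = 0 := by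
    have h := hAskew x x
    have hc := real_inner_comm x (A x)
    linarith
  -- ⟪x, j x⟫ = 0
  have hxjx : ⟪x, j x⟫ = 0 := by
    have h := hjskew x x
    have hc := real_inner_comm x (j x)
    linarith
  have hjxx : ⟪j x, x⟫ = 0 := by rw [real_inner_comm]; exact hxjx
  -- ⟪A x, j x⟫ = 0
  have h2 : ⟪A x, j x⟫ = 0 := by
    have k1 := hjskew (A x) x
    have k2 : (⟪A (j x), x⟫ : ℝ) = -⟪j (A x), x⟫ := by rw [hAj x, inner_neg_left]
    have k3 := hAskew (j x) x
    have k4 := real_inner_comm (j x) (A x)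
    linarith
  -- x and j x are linearly independent
  have hli : LinearIndependent ℝ ![x, j x] := by
    rw [LinearIndependent.pair_iff]
    intro s t hst
    have hs : s * ‖x‖ ^ 2 = 0 := by
      have h := congrArg (fun v => (⟪v, x⟫ : ℝ)) hst
      simpa [inner_add_left, inner_smul_left, hjxx,
        real_inner_self_eq_norm_sq] using h
    have ht : t * ‖j x‖ ^ 2 = 0 := by
      have h := congrArg (fun v => (⟪v, j x⟫ : ℝ)) hst
      simpa [inner_add_left, inner_smul_left, hxjx,
        real_inner_self_eq_norm_sq] using h
    constructor
    · rcases mul_eq_zero.mp hs with h | h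
      · exact h
      · exact absurd (by simpa [norm_eq_zero] using pow_eq_zero_iff (n := 2) (by norm_num) |>.mp h) hx
    · rcases mul_eq_zero.mp ht with h | h
      · exact h
      · exact absurd (by simpa [norm_eq_zero] using pow_eq_zero_iff (n := 2) (by norm_num) |>.mp h) hjx
  -- span {x, j x} = ⊤
  have hspan : Submodule.span ℝ {x, j x} = ⊤ := by
    apply Submodule.eq_top_of_finrank_eq
    have : ({x, j x} : Set V) = Set.range ![x, j x] := by
      simp [Matrix.range_cons, Matrix.range_empty, Set.insert_comm]
      ext v; simp [or_comm]
    rw [this, finrank_span_eq_card hli]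
    simp [hV]
  -- A x is orthogonal to everything
  have : ⟪A x, A x⟫ = 0 := by
    have hmem : A x ∈ Submodule.span ℝ ({x, j x} : Set V) := by
      rw [hspan]; trivial
    rcases Submodule.mem_span_pair.mp hmem with ⟨a, b, hab⟩
    calc ⟪A x, A x⟫ = ⟪A x, a • x + b • j x⟫ := by rw [hab]
    _ = a * ⟪A x, x⟫ + b * ⟪A x, j x⟫ := by
        simp [inner_add_right, inner_smul_right]
    _ = 0 := by rw [h1, h2]; ring
  exact inner_self_eq_zero.mp this
end
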